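/- Cross-difference identification of the local average controlled direct effect on a rectangle (Theorem 3.1, item 3, direct, d = 1): let 0 ≤ p₀ < p₀' ≤ 1 and 0 ≤ p₁ < p₁' ≤ 1 with ℙ(p₀ < V₀ ≤ p₀' and p₁ < V₁ ≤ p₁') > 0. Then ([G¹(p₀',p₁') − G¹(p₀',p₁)] − [G¹(p₀,p₁') − G¹(p₀,p₁)]) / ([C(p₀',p₁') − C(p₀',p₁)] − [C(p₀,p₁') − C(p₀,p₁)]) = 𝔼[ m(1,1,U) − m(0,1,U) | p₀ < V₀ ≤ p₀' and p₁ < V₁ ≤ p₁' ]. -/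

import Mathlib

/-!
G¹ and C are integrals of functions of `(p, q)` built from the indicators `1{V₀ ≤ p}`,
`1{p < V₀}` and `1{V₁ ≤ q}`. The rectangle cross-difference commutes with the integral, and for
`p₀ ≤ p₀'`, `p₁ ≤ p₁'` it sends `1{V₀ ≤ p} 1{V₁ ≤ q}` to the indicator of the rectangle event `E`
and `1{p < V₀} 1{V₁ ≤ q}` to minus that indicator. So the numerator is
`∫_E (m(1,1,U) - m(0,1,U))` and the denominator is `ℙ(E)`.
-/

open MeasureTheory

def crossDiff {β γ α : Type*} [AddCommGroup α] (F : β → γ → α) (a a' : β) (b b' : γ) : α :=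
  (F a' b' - F a' b) - (F a b' - F a b)

section CrossDiff

variable {β γ α : Type*} (a a' : β) (b b' : γ)

lemma crossDiff_add [AddCommGroup α] (F G : β → γ → α) :
    crossDiff (fun p q => F p q + G p q) a a' b b' =
      crossDiff F a a' b b' + crossDiff G a a' b b' := by
  simp only [crossDiff]; abel

lemma crossDiff_mul_left [Ring α] (c : α) (F : β → γ → α) :
    crossDiff (fun p q => c * F p q) a a' b b' = c * crossDiff F a a' b b' := by
  simp only [crossDiff]; noncomm_ring

lemma crossDiff_mul [CommRing α] (f : β → α) (g : γ → α) :
    crossDiff (fun p q => f p * g q) a a' b b' = (f a' - f a) * (g b' - g b) := by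
  simp only [crossDiff]; ring

lemma crossDiff_integral {Ω : Type*} [MeasurableSpace Ω] {μ : Measure Ω} {F : β → γ → Ω → ℝ}
    (hF : ∀ p q, Integrable (F p q) μ) :
    crossDiff (fun p q => ∫ ω, F p q ω ∂μ) a a' b b' =
      ∫ ω, crossDiff (fun p q => F p q ω) a a' b b' ∂μ := by
  simp only [crossDiff]
  rw [integral_sub, integral_sub (hF _ _) (hF _ _), integral_sub (hF _ _) (hF _ _)]
  exacts [(hF _ _).sub (hF _ _), (hF _ _).sub (hF _ _)]

end CrossDiff

lemma ite_le_sub_ite_le {a a' x : ℝ} (h : a ≤ a') :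
    ((if x ≤ a' then (1:ℝ) else 0) - if x ≤ a then 1 else 0) =
      if a < x ∧ x ≤ a' then 1 else 0 := by
  by_cases hx : x ≤ a
  · simp [hx, hx.trans h]
  · by_cases hx' : x ≤ a' <;> simp [hx, hx']

lemma ite_lt_sub_ite_lt {a a' x : ℝ} (h : a ≤ a') :
    ((if a' < x then (1:ℝ) else 0) - if a < x then 1 else 0) =
      -if a < x ∧ x ≤ a' then 1 else 0 := by
  by_cases hx' : a' < x
  · simp [hx', h.trans_lt hx']
  · by_cases hx : a < x <;> simp [hx, hx']

section Rectangle

variable {Ω : Type*} [MeasurableSpace Ω] {μ : Measure Ω} {f : Ω → ℝ} {V₀ V₁ : Ω → ℝ}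
  {p₀ p₀' p₁ p₁' : ℝ}

lemma MeasureTheory.Integrable.mul_ite_one_zero (hf : Integrable f μ) {P : Ω → Prop}
    [DecidablePred P] (hP : MeasurableSet {ω | P ω}) :
    Integrable (fun ω => f ω * if P ω then 1 else 0) μ :=
  hf.mul_bdd (c := 1) (Measurable.ite hP measurable_const measurable_const).aestronglyMeasurable
    (ae_of_all _ fun ω => by split_ifs <;> simp)

lemma measurableSet_rectangle (hV₀ : Measurable V₀) (hV₁ : Measurable V₁) :
    MeasurableSet {ω | p₀ < V₀ ω ∧ V₀ ω ≤ p₀' ∧ p₁ < V₁ ω ∧ V₁ ω ≤ p₁'} :=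
  (measurableSet_lt measurable_const hV₀).inter <|
    (measurableSet_le hV₀ measurable_const).inter <|
    (measurableSet_lt measurable_const hV₁).inter (measurableSet_le hV₁ measurable_const)

lemma crossDiff_integral_mul_ite_le_mul_ite_le (hf : Integrable f μ) (hV₀ : Measurable V₀)
    (hV₁ : Measurable V₁) (h₀ : p₀ ≤ p₀') (h₁ : p₁ ≤ p₁') :
    crossDiff
        (fun p q => ∫ ω, f ω * (if V₀ ω ≤ p then 1 else 0) * (if V₁ ω ≤ q then 1 else 0) ∂μ)
        p₀ p₀' p₁ p₁' =
      ∫ ω in {ω | p₀ < V₀ ω ∧ V₀ ω ≤ p₀' ∧ p₁ < V₁ ω ∧ V₁ ω ≤ p₁'}, f ω ∂μ := by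
  rw [crossDiff_integral, ← integral_indicator (measurableSet_rectangle hV₀ hV₁)]
  · congr 1
    funext ω
    simp_rw [mul_assoc]
    rw [crossDiff_mul_left, crossDiff_mul, ite_le_sub_ite_le h₀, ite_le_sub_ite_le h₁,
      ite_zero_mul_ite_zero, Set.indicator_apply]
    simp [and_assoc]
  · intro p q
    exact (hf.mul_ite_one_zero (measurableSet_le hV₀ measurable_const)).mul_ite_one_zero
      (measurableSet_le hV₁ measurable_const)

lemma crossDiff_integral_mul_ite_lt_mul_ite_le (hf : Integrable f μ) (hV₀ : Measurable V₀)
    (hV₁ : Measurable V₁) (h₀ : p₀ ≤ p₀') (h₁ : p₁ ≤ p₁') :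
    crossDiff
        (fun p q => ∫ ω, f ω * (if p < V₀ ω then 1 else 0) * (if V₁ ω ≤ q then 1 else 0) ∂μ)
        p₀ p₀' p₁ p₁' =
      -∫ ω in {ω | p₀ < V₀ ω ∧ V₀ ω ≤ p₀' ∧ p₁ < V₁ ω ∧ V₁ ω ≤ p₁'}, f ω ∂μ := by
  rw [crossDiff_integral, ← integral_indicator (measurableSet_rectangle hV₀ hV₁),
    ← integral_neg]
  · congr 1
    funext ω
    simp_rw [mul_assoc]
    rw [crossDiff_mul_left, crossDiff_mul, ite_lt_sub_ite_lt h₀, ite_le_sub_ite_le h₁, neg_mul,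
      ite_zero_mul_ite_zero, Set.indicator_apply]
    simp [and_assoc]
  · intro p q
    exact (hf.mul_ite_one_zero (measurableSet_lt measurable_const hV₀)).mul_ite_one_zero
      (measurableSet_le hV₁ measurable_const)

end Rectangle

theorem lacde_rectangle_identification
    {Ω 𝒰 : Type*} [MeasurableSpace Ω] [MeasurableSpace 𝒰]
    (μ : Measure Ω) [IsProbabilityMeasure μ]
    (U : Ω → 𝒰) (V₀ V₁ : Ω → ℝ)
    (hU : Measurable U) (hV₀ : Measurable V₀) (hV₁ : Measurable V₁)
    -- bounded measurable outcome function (`true` codes treatment 1, `false` codes 0)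
    (m : Bool → Bool → 𝒰 → ℝ) (hm : ∀ d d', Measurable (m d d'))
    (hm_bdd : ∃ B, ∀ d d' u, |m d d' u| ≤ B)
    -- the copula of (V₀, V₁)
    (C : ℝ → ℝ → ℝ)
    (hC : ∀ p q, C p q = (μ {ω | V₀ ω ≤ p ∧ V₁ ω ≤ q}).toReal)
    -- identified conditional-mean function G¹
    (G1 : ℝ → ℝ → ℝ)
    (hG1 : ∀ p q, G1 p q =
      (∫ ω, m true true (U ω) * (if V₀ ω ≤ p then (1:ℝ) else 0)
        * (if V₁ ω ≤ q then (1:ℝ) else 0) ∂μ)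
      + ∫ ω, m false true (U ω) * (if p < V₀ ω then (1:ℝ) else 0)
        * (if V₁ ω ≤ q then (1:ℝ) else 0) ∂μ)
    -- the propensity-score values
    (p₀ p₀' p₁ p₁' : ℝ) (hp₀lt : p₀ < p₀')
    (hp₁lt : p₁ < p₁')
    (E : Set Ω)
    (hE : E = {ω | p₀ < V₀ ω ∧ V₀ ω ≤ p₀' ∧ p₁ < V₁ ω ∧ V₁ ω ≤ p₁'}) :
    ((G1 p₀' p₁' - G1 p₀' p₁) - (G1 p₀ p₁' - G1 p₀ p₁))
      / ((C p₀' p₁' - C p₀' p₁) - (C p₀ p₁' - C p₀ p₁))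
      = (∫ ω in E, (m true true (U ω) - m false true (U ω)) ∂μ) / (μ E).toReal := by
  obtain ⟨B, hB⟩ := hm_bdd
  have hm_int (d d' : Bool) : Integrable (fun ω => m d d' (U ω)) μ :=
    .of_bound ((hm d d').comp hU).aestronglyMeasurable B (ae_of_all _ fun ω => hB d d' (U ω))
  have hnum : crossDiff G1 p₀ p₀' p₁ p₁' =
      ∫ ω in E, (m true true (U ω) - m false true (U ω)) ∂μ := by
    rw [funext₂ hG1, crossDiff_add,
      crossDiff_integral_mul_ite_le_mul_ite_le (hm_int true true) hV₀ hV₁ hp₀lt.le hp₁lt.le,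
      crossDiff_integral_mul_ite_lt_mul_ite_le (hm_int false true) hV₀ hV₁ hp₀lt.le hp₁lt.le,
      ← hE, integral_sub (hm_int true true).integrableOn (hm_int false true).integrableOn,
      sub_eq_add_neg]
  have hC_integral (p q : ℝ) :
      C p q = ∫ ω, 1 * (if V₀ ω ≤ p then (1:ℝ) else 0) * (if V₁ ω ≤ q then 1 else 0) ∂μ := by
    have hs : MeasurableSet {ω | V₀ ω ≤ p ∧ V₁ ω ≤ q} :=
      (measurableSet_le hV₀ measurable_const).inter (measurableSet_le hV₁ measurable_const)
    rw [hC, ← measureReal_def, ← integral_indicator_one hs]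
    simp_rw [one_mul, ite_zero_mul_ite_zero, one_mul, Set.indicator_apply, Set.mem_ofPred_eq,
      Pi.one_apply]
  have hden : crossDiff C p₀ p₀' p₁ p₁' = μ.real E := by
    rw [funext₂ hC_integral,
      crossDiff_integral_mul_ite_le_mul_ite_le (integrable_const 1) hV₀ hV₁ hp₀lt.le hp₁lt.le,
      ← hE, setIntegral_const, smul_eq_mul, mul_one]
  exact congrArg₂ (· / ·) hnum hden
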